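/- arXiv:2509.19886 — 2 statements merged into one kernel-verified Lean document; each statement's English description precedes it below -/
import Mathlib

section
/- For λ, μ > 0 and x ∈ ℝ^N, let ψ(x) = -Nμ·ln(Σ_{n=1}^N (e^{x_n/λ} + e^{-x_n/λ})^{-λ/μ}). Then for fixed μ > 0, as λ → 0⁺ and then μ → 0⁺ (or jointly), ψ(x) converges to N·min_n |x_n|. -/
/-!
With `b = exp (a / λ) + exp (-a / λ)`, the quantity `λ log b` smooths `|a|`:
`exp |a / λ| ≤ b ≤ 2 exp |a / λ|` gives `|a| ≤ λ log b ≤ |a| + λ log 2`. Since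
`b ^ (-(λ / μ)) = exp (-(λ log b) / μ)`, `ψ(x) / N` is the soft minimum `-μ log ∑ₙ exp (-yₙ / μ)` of
`yₙ = λ log bₙ`, which lies between `minₙ yₙ - μ log N` and `minₙ yₙ`. Hence `ψ(x)` is squeezed
between `N (minₙ |xₙ| - μ log N)` and `N (minₙ |xₙ| + λ log 2)`.
-/

open Real Filter Topology Finset

namespace Real

lemma exp_abs_le_exp_add_exp_neg (a : ℝ) : exp |a| ≤ exp a + exp (-a) := by
  rcases abs_cases a with ⟨h, -⟩ | ⟨h, -⟩ <;> rw [h]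
  · linarith [exp_pos (-a)]
  · linarith [exp_pos a]

lemma exp_add_exp_neg_le_two_mul_exp_abs (a : ℝ) : exp a + exp (-a) ≤ 2 * exp |a| := by
  have := exp_le_exp.2 (le_abs_self a)
  have := exp_le_exp.2 (neg_le_abs a)
  linarith

lemma abs_le_mul_log_exp_add_exp_neg (a : ℝ) {l : ℝ} (hl : 0 < l) :
    |a| ≤ l * log (exp (a / l) + exp (-a / l)) := by
  have h := log_le_log (exp_pos _) (exp_abs_le_exp_add_exp_neg (a / l))
  rw [log_exp, abs_div, abs_of_pos hl, ← neg_div] at h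
  rwa [div_le_iff₀' hl] at h

lemma mul_log_exp_add_exp_neg_le (a : ℝ) {l : ℝ} (hl : 0 < l) :
    l * log (exp (a / l) + exp (-a / l)) ≤ |a| + l * log 2 := by
  have h := log_le_log (by positivity) (exp_add_exp_neg_le_two_mul_exp_abs (a / l))
  rw [log_mul two_ne_zero (exp_pos _).ne', log_exp, abs_div, abs_of_pos hl, ← neg_div] at h
  have := mul_le_mul_of_nonneg_left h hl.le
  rw [mul_add, mul_div_cancel₀ _ hl.ne'] at this
  linarith

lemma rpow_neg_div_eq_exp {b : ℝ} (hb : 0 < b) (l u : ℝ) :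
    b ^ (-(l / u)) = exp (-(l * log b) / u) := by
  rw [rpow_def_of_pos hb]
  ring_nf

end Real

section SoftMin

variable {ι : Type*} [Fintype ι] {y : ι → ℝ} {t : ℝ}

lemma sub_mul_log_card_le_neg_mul_log_sum_exp [Nonempty ι] {m : ℝ} (ht : 0 < t)
    (hm : ∀ i, m ≤ y i) :
    m - t * log (Fintype.card ι) ≤ -t * log (∑ i, exp (-y i / t)) := by
  have hS : ∑ i, exp (-y i / t) ≤ Fintype.card ι * exp (-m / t) :=
    (sum_le_sum fun i _ ↦
      exp_le_exp.2 <| div_le_div_of_nonneg_right (neg_le_neg (hm i)) ht.le).trans_eq (by simp)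
  have h := log_le_log (by positivity) hS
  rw [log_mul (by positivity) (exp_pos _).ne', log_exp] at h
  have := mul_le_mul_of_nonneg_left h ht.le
  rw [mul_add, mul_div_cancel₀ _ ht.ne'] at this
  linarith

lemma neg_mul_log_sum_exp_le {m : ℝ} (ht : 0 < t) (i : ι) (hi : y i ≤ m) :
    -t * log (∑ i, exp (-y i / t)) ≤ m := by
  have hS : exp (-m / t) ≤ ∑ i, exp (-y i / t) :=
    (exp_le_exp.2 <| div_le_div_of_nonneg_right (neg_le_neg hi) ht.le).trans <|
      single_le_sum (f := fun j ↦ exp (-y j / t)) (fun j _ ↦ (exp_pos _).le) (mem_univ i)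
  have h := log_le_log (exp_pos _) hS
  rw [log_exp] at h
  have := mul_le_mul_of_nonneg_left h ht.le
  rw [mul_div_cancel₀ _ ht.ne'] at this
  linarith

end SoftMin

section ULPENS

variable {ι : Type*} [Fintype ι] [Nonempty ι] (x : ι → ℝ) {l u : ℝ}

lemma inf'_abs_sub_mul_log_card_le (hl : 0 < l) (hu : 0 < u) :
    univ.inf' univ_nonempty (fun n ↦ |x n|) - u * log (Fintype.card ι) ≤
      -u * log (∑ n, (exp (x n / l) + exp (-x n / l)) ^ (-(l / u))) := by
  simp only [fun n ↦ rpow_neg_div_eq_exp (b := exp (x n / l) + exp (-x n / l)) (by positivity) l u]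
  refine sub_mul_log_card_le_neg_mul_log_sum_exp hu fun n ↦ ?_
  exact (inf'_le _ (mem_univ n)).trans (abs_le_mul_log_exp_add_exp_neg (x n) hl)

lemma le_inf'_abs_add_mul_log_two (hl : 0 < l) (hu : 0 < u) :
    -u * log (∑ n, (exp (x n / l) + exp (-x n / l)) ^ (-(l / u))) ≤
      univ.inf' univ_nonempty (fun n ↦ |x n|) + l * log 2 := by
  simp only [fun n ↦ rpow_neg_div_eq_exp (b := exp (x n / l) + exp (-x n / l)) (by positivity) l u]
  obtain ⟨i, -, hi⟩ := exists_mem_eq_inf' univ_nonempty (fun n ↦ |x n|)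
  exact neg_mul_log_sum_exp_le hu i (hi ▸ mul_log_exp_add_exp_neg_le (x i) hl)

end ULPENS

theorem stmt_10 (N : ℕ) (hN : 0 < N) (x : Fin N → ℝ) :
    Tendsto
      (fun p : ℝ × ℝ =>
        -(N : ℝ) * p.2 *
          Real.log (∑ n, (Real.exp (x n / p.1) + Real.exp (-x n / p.1)) ^ (-(p.1 / p.2))))
      ((𝓝[>] 0) ×ˢ (𝓝[>] 0))
      (𝓝 ((N : ℝ) * Finset.univ.inf' ⟨⟨0, hN⟩, Finset.mem_univ _⟩ (fun n => |x n|))) := by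
  have : Nonempty (Fin N) := ⟨⟨0, hN⟩⟩
  set M := univ.inf' univ_nonempty fun n ↦ |x n|
  have hpos : ∀ᶠ p : ℝ × ℝ in (𝓝[>] 0) ×ˢ (𝓝[>] 0), 0 < p.1 ∧ 0 < p.2 :=
    Eventually.prod_mk self_mem_nhdsWithin self_mem_nhdsWithin
  have hlim : ∀ f : ℝ × ℝ → ℝ, Continuous f → f (0, 0) = N * M →
      Tendsto f ((𝓝[>] 0) ×ˢ (𝓝[>] 0)) (𝓝 (N * M)) := fun f hf hf0 ↦
    hf0 ▸ (hf.tendsto _).mono_left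
      (nhds_prod_eq (x := (0 : ℝ)) (y := (0 : ℝ)) ▸ prod_mono nhdsWithin_le_nhds nhdsWithin_le_nhds)
  refine tendsto_of_tendsto_of_tendsto_of_le_of_le'
    (hlim (fun p ↦ N * (M - p.2 * log N)) (by fun_prop) (by simp))
    (hlim (fun p ↦ N * (M + p.1 * log 2)) (by fun_prop) (by simp)) ?_ ?_
  · filter_upwards [hpos] with p ⟨hl, hu⟩
    have := mul_le_mul_of_nonneg_left (inf'_abs_sub_mul_log_card_le x hl hu) N.cast_nonneg
    rw [Fintype.card_fin] at this
    linarith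
  · filter_upwards [hpos] with p ⟨hl, hu⟩
    have := mul_le_mul_of_nonneg_left (le_inf'_abs_add_mul_log_two x hl hu) N.cast_nonneg
    linarith
end

section
/- For λ, μ > 0 and x ∈ ℝ^N, the off-diagonal entries (n ≠ m) of the Hessian of ψ(x) = -Nμ·ln(Σ_{n=1}^N (e^{x_n/λ}+e^{-x_n/λ})^{-λ/μ}) are given by H_{m,n}(x) = (N/μ)·tanh(x_n/λ)·φ_n(x)·tanh(x_m/λ)·φ_m(x), where φ_n(x) = (e^{x_n/λ}+e^{-x_n/λ})^{-λ/μ} / Σ_k (e^{x_k/λ}+e^{-x_k/λ})^{-λ/μ}. -/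
/-!
For `ψ z = a * log S z` with `S z = ∑ n, c (z n)`, the gradient is `∂ⱼ ψ = a * c' (z j) / S z`.
Off the diagonal only the denominator depends on `zᵢ`, so `Hᵢⱼ = -a * c' (z i) * c' (z j) / S z ^ 2`.
For `c t = (exp (t / λ) + exp (-t / λ)) ^ (-λ / μ) = (2 cosh (t / λ)) ^ (-λ / μ)` one has
`c' t = -(1 / μ) * c t * tanh (t / λ)`, and with `a = -N μ` this is the claimed formula.
-/

open Real Finset

section CoordinateSum

variable {ι : Type*} [Fintype ι] {c c' : ℝ → ℝ}

theorem hasFDerivAt_sum_comp_apply (hc : ∀ t, HasDerivAt c (c' t) t) (y : ι → ℝ) :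
    HasFDerivAt (fun z : ι → ℝ => ∑ n, c (z n))
      (∑ n, c' (y n) • ContinuousLinearMap.proj (R := ℝ) (φ := fun _ : ι => ℝ) n) y :=
  HasFDerivAt.fun_sum fun n _ => (hc (y n)).comp_hasFDerivAt y (hasFDerivAt_apply n y)

theorem sum_smul_proj_apply_single [DecidableEq ι] (a : ι → ℝ) (j : ι) :
    (∑ n, a n • ContinuousLinearMap.proj (R := ℝ) (φ := fun _ : ι => ℝ) n) (Pi.single j 1)
      = a j := by
  simp [Pi.single_apply]

theorem sum_comp_apply_pos (hc_pos : ∀ t, 0 < c t) (y : ι → ℝ) (j : ι) :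
    0 < ∑ n, c (y n) :=
  Finset.sum_pos (fun n _ => hc_pos (y n)) ⟨j, Finset.mem_univ j⟩

theorem fderiv_const_mul_log_sum_comp_apply_single [DecidableEq ι] (a : ℝ)
    (hc_pos : ∀ t, 0 < c t) (hc : ∀ t, HasDerivAt c (c' t) t) (y : ι → ℝ) (j : ι) :
    fderiv ℝ (fun z : ι → ℝ => a * Real.log (∑ n, c (z n))) y (Pi.single j 1)
      = a * c' (y j) / ∑ n, c (y n) := by
  rw [(((hasFDerivAt_sum_comp_apply hc y).log (sum_comp_apply_pos hc_pos y j).ne').const_mul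
    a).fderiv]
  simp only [smul_apply, sum_smul_proj_apply_single, smul_eq_mul]
  field_simp

theorem fderiv_div_sum_comp_apply_single_of_ne [DecidableEq ι] (hc_pos : ∀ t, 0 < c t)
    (hc : ∀ t, HasDerivAt c (c' t) t) {g : ℝ → ℝ} {x : ι → ℝ} {i j : ι}
    (hg : DifferentiableAt ℝ g (x j)) (hij : i ≠ j) :
    fderiv ℝ (fun y : ι → ℝ => g (y j) / ∑ n, c (y n)) x (Pi.single i 1)
      = -(g (x j) * c' (x i)) / (∑ n, c (x n)) ^ 2 := by
  have hS := sum_comp_apply_pos hc_pos x j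
  have hnum := hg.hasDerivAt.comp_hasFDerivAt x (hasFDerivAt_apply (𝕜 := ℝ) j x)
  have hinv := (hasDerivAt_inv hS.ne').comp_hasFDerivAt x (hasFDerivAt_sum_comp_apply hc x)
  simp only [Function.comp_def] at hnum hinv
  simp only [div_eq_mul_inv]
  rw [(hnum.fun_mul hinv).fderiv]
  simp only [add_apply, smul_apply, sum_smul_proj_apply_single, ContinuousLinearMap.proj_apply,
    Pi.single_eq_of_ne hij.symm, smul_eq_mul]
  ring

theorem fderiv_fderiv_const_mul_log_sum_comp_of_ne [DecidableEq ι] (a : ℝ)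
    (hc_pos : ∀ t, 0 < c t) (hc : ∀ t, HasDerivAt c (c' t) t) {x : ι → ℝ} {i j : ι}
    (hc' : DifferentiableAt ℝ c' (x j)) (hij : i ≠ j) :
    fderiv ℝ (fun y : ι → ℝ =>
        fderiv ℝ (fun z : ι → ℝ => a * Real.log (∑ n, c (z n))) y (Pi.single j 1))
      x (Pi.single i 1)
      = -(a * c' (x j) * c' (x i)) / (∑ n, c (x n)) ^ 2 := by
  simp only [fderiv_const_mul_log_sum_comp_apply_single a hc_pos hc]
  exact fderiv_div_sum_comp_apply_single_of_ne hc_pos hc (hc'.const_mul a) hij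

end CoordinateSum

theorem Real.differentiable_tanh : Differentiable ℝ tanh := by
  rw [show tanh = fun x => sinh x / cosh x from funext tanh_eq_sinh_div_cosh]
  exact differentiable_sinh.div differentiable_cosh fun x => (cosh_pos x).ne'

theorem hasDerivAt_exp_div_add_exp_neg_div_rpow (l p t : ℝ) :
    HasDerivAt (fun t => (exp (t / l) + exp (-t / l)) ^ p)
      (p / l * (exp (t / l) + exp (-t / l)) ^ p * tanh (t / l)) t := by
  have h2cosh : ∀ s, exp (s / l) + exp (-s / l) = 2 * cosh (s / l) := fun s => by
    rw [cosh_eq, neg_div]; ring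
  have hcosh := ((hasDerivAt_id t).div_const l).cosh.const_mul 2
  simp only [id] at hcosh
  simp only [h2cosh]
  have hpos : 0 < 2 * cosh (t / l) := by positivity
  convert hcosh.rpow_const (p := p) (Or.inl hpos.ne') using 1
  rw [rpow_sub_one hpos.ne', tanh_eq_sinh_div_cosh]
  field_simp

theorem stmt_18 (N : ℕ) (l m : ℝ) (hl : 0 < l) (hm : 0 < m) (x : Fin N → ℝ)
    (i j : Fin N) (hij : i ≠ j) :
    (fderiv ℝ
        (fun y : Fin N → ℝ =>
          fderiv ℝ
            (fun z : Fin N → ℝ =>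
              -(N : ℝ) * m *
                Real.log (∑ n, (Real.exp (z n / l) + Real.exp (-z n / l)) ^ (-(l / m))))
            y (Pi.single j 1))
        x) (Pi.single i 1)
      = (N : ℝ) / m * Real.tanh (x j / l) *
          ((Real.exp (x j / l) + Real.exp (-x j / l)) ^ (-(l / m)) /
            ∑ k, (Real.exp (x k / l) + Real.exp (-x k / l)) ^ (-(l / m))) *
          Real.tanh (x i / l) *
          ((Real.exp (x i / l) + Real.exp (-x i / l)) ^ (-(l / m)) /
            ∑ k, (Real.exp (x k / l) + Real.exp (-x k / l)) ^ (-(l / m))) := by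
  have hc_pos : ∀ t, 0 < (exp (t / l) + exp (-t / l)) ^ (-(l / m)) :=
    fun t => rpow_pos_of_pos (by positivity) _
  have hc := hasDerivAt_exp_div_add_exp_neg_div_rpow l (-(l / m))
  have hc' := ((differentiableAt_const (-(l / m) / l)).mul (hc (x j)).differentiableAt).mul
    (Real.differentiable_tanh.differentiableAt.comp (x j) (differentiableAt_id.div_const l))
  refine (fderiv_fderiv_const_mul_log_sum_comp_of_ne _ hc_pos hc hc' hij).trans ?_
  have hS : 0 < ∑ n, (exp (x n / l) + exp (-x n / l)) ^ (-(l / m)) :=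
    sum_comp_apply_pos hc_pos x j
  field_simp
end
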